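/- arXiv:1507.08690 — 3 statements merged into one kernel-verified Lean document; each statement's English description precedes it below -/
import Mathlib

section
/- Let n ≥ 2 be an even integer and let x_1, …, x_n be positive integers. For every subset S' ⊆ {1, …, n} there exists a path in the hour-glass structure built from x_1, …, x_n whose sum equals ∑_{i ∈ S'} x_i; explicitly, the assignment c_{2i−1} = n−1 for i ∈ S', c_{2i−1} = n+1 for i ∉ S', and c_{2i} = n for all even rows 2i, is such a path. -/
/-!
The path stays within distance one of the centre column `n`, alternating between `n` on
even rows and `n ∓ 1` on odd rows; as `n` is even the parities match, and such a cell is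
always valid. Only the cells `(2i - 1, n - 1)` carry values, and the path visits exactly
those with `i ∈ S'`.
-/

def HGValid (n r : ℕ) (c : ℤ) : Prop :=
  c % 2 = (r : ℤ) % 2 ∧ |c - (n : ℤ)| ≤ |(r : ℤ) - (n : ℤ)|

/-- The value of the cell `(r, c)`: it is `x i` when `r = 2*i - 1` for some
`i ∈ {1, …, n}` (i.e. `r` is odd, `1 ≤ r ≤ 2n-1`, and `i = (r+1)/2`) and `c = n - 1`;
otherwise it is `0`. -/
def hgValue (n : ℕ) (x : ℕ → ℕ) (r : ℕ) (c : ℤ) : ℕ :=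
  if r % 2 = 1 ∧ 1 ≤ r ∧ r ≤ 2 * n - 1 ∧ c = (n : ℤ) - 1 then x ((r + 1) / 2) else 0

def IsHGPath (n : ℕ) (c : ℕ → ℤ) : Prop :=
  (∀ r, 1 ≤ r → r ≤ 2 * n - 1 → HGValid n r (c r)) ∧
  (∀ r, 1 ≤ r → r < 2 * n - 1 → |c (r + 1) - c r| = 1)

def hgSum (n : ℕ) (x : ℕ → ℕ) (c : ℕ → ℤ) : ℕ :=
  ∑ r ∈ Finset.Icc 1 (2 * n - 1), hgValue n x r (c r)

open Finset

def subsetPath (n : ℕ) (S : Finset ℕ) (r : ℕ) : ℤ :=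
  if r % 2 = 1 then (if (r + 1) / 2 ∈ S then (n : ℤ) - 1 else (n : ℤ) + 1) else (n : ℤ)

/-- On row `r = n` the parity condition already forces `c = n`. -/
theorem hgValid_of_abs_sub_le_one {n r : ℕ} {c : ℤ} (hpar : c % 2 = (r : ℤ) % 2)
    (hdist : |c - n| ≤ 1) : HGValid n r c := by
  refine ⟨hpar, ?_⟩
  rw [abs_le] at hdist
  rcases abs_cases ((r : ℤ) - n) with ⟨h, _⟩ | ⟨h, _⟩ <;>
    rcases abs_cases (c - n) with ⟨h', _⟩ | ⟨h', _⟩ <;> omega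

theorem isHGPath_subsetPath {n : ℕ} (hn : Even n) (S : Finset ℕ) :
    IsHGPath n (subsetPath n S) := by
  have hn2 : n % 2 = 0 := Nat.even_iff.mp hn
  refine ⟨fun r _ _ => hgValid_of_abs_sub_le_one ?_ ?_, fun r _ _ => ?_⟩ <;>
    simp only [subsetPath] <;> split_ifs <;> norm_num <;> omega

theorem hgValue_two_mul_sub_one (n : ℕ) (x : ℕ → ℕ) {i : ℕ} (hi : i ∈ Icc 1 n) (c : ℤ) :
    hgValue n x (2 * i - 1) c = if c = (n : ℤ) - 1 then x i else 0 := by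
  rw [mem_Icc] at hi
  have hdiv : (2 * i - 1 + 1) / 2 = i := by omega
  simp only [hgValue, hdiv]
  congr 1
  exact propext ⟨fun h => h.2.2.2, fun h => ⟨by omega, by omega, by omega, h⟩⟩

theorem hgSum_eq_sum_filter (n : ℕ) (x : ℕ → ℕ) (c : ℕ → ℤ) :
    hgSum n x c = ∑ i ∈ (Icc 1 n).filter (fun i => c (2 * i - 1) = (n : ℤ) - 1), x i := by
  have hodd : (Icc 1 n).image (fun i => 2 * i - 1) ⊆ Icc 1 (2 * n - 1) := by
    intro r hr
    simp only [mem_image, mem_Icc] at hr ⊢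
    omega
  have hvanish : ∀ r ∈ Icc 1 (2 * n - 1), r ∉ (Icc 1 n).image (fun i => 2 * i - 1) →
      hgValue n x r (c r) = 0 := by
    intro r _ hr
    refine if_neg fun ⟨hr2, hr1, hrn, _⟩ => hr (mem_image.mpr ⟨(r + 1) / 2, ?_, ?_⟩)
    · exact mem_Icc.mpr ⟨by omega, by omega⟩
    · omega
  have hinj : Set.InjOn (fun i => 2 * i - 1) (Icc 1 n : Set ℕ) := by
    intro a ha b hb h
    simp only [coe_Icc, Set.mem_Icc] at ha hb h
    omega
  rw [hgSum, ← sum_subset hodd hvanish, sum_image hinj, sum_filter]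
  exact sum_congr rfl fun i hi => hgValue_two_mul_sub_one n x hi (c (2 * i - 1))

theorem subsetPath_two_mul_sub_one (n : ℕ) (S : Finset ℕ) {i : ℕ} (hi : 1 ≤ i) :
    subsetPath n S (2 * i - 1) = if i ∈ S then (n : ℤ) - 1 else (n : ℤ) + 1 := by
  have hodd : (2 * i - 1) % 2 = 1 := by omega
  have hdiv : (2 * i - 1 + 1) / 2 = i := by omega
  rw [subsetPath, if_pos hodd, hdiv]

theorem hgSum_subsetPath (n : ℕ) (x : ℕ → ℕ) {S : Finset ℕ} (hS : S ⊆ Icc 1 n) :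
    hgSum n x (subsetPath n S) = ∑ i ∈ S, x i := by
  have hvisited : (Icc 1 n).filter (fun i => subsetPath n S (2 * i - 1) = (n : ℤ) - 1) = S := by
    ext i
    rw [mem_filter]
    refine ⟨fun ⟨hi, hc⟩ => ?_, fun hiS => ⟨hS hiS, ?_⟩⟩
    · rw [subsetPath_two_mul_sub_one n S (mem_Icc.mp hi).1] at hc
      split_ifs at hc with hiS
      · exact hiS
      · omega
    · rw [subsetPath_two_mul_sub_one n S (mem_Icc.mp (hS hiS)).1, if_pos hiS]
  rw [hgSum_eq_sum_filter, hvisited]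

theorem hourglass_explicit_path_of_subset_general
    (n : ℕ) (hneven : Even n)
    (x : ℕ → ℕ)
    (S' : Finset ℕ) (hS' : S' ⊆ Finset.Icc 1 n)
    (c : ℕ → ℤ)
    (hc : c = fun r => if r % 2 = 1 then
        (if (r + 1) / 2 ∈ S' then (n : ℤ) - 1 else (n : ℤ) + 1)
      else (n : ℤ)) :
    IsHGPath n c ∧ hgSum n x c = ∑ i ∈ S', x i := by
  subst hc
  exact ⟨isHGPath_subsetPath hneven S', hgSum_subsetPath n x hS'⟩

/-- For every subset `S' ⊆ {1, …, n}` the explicit assignment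
`c (2i-1) = n-1` for `i ∈ S'`, `c (2i-1) = n+1` for `i ∉ S'`, and `c (2i) = n`,
is a path of the hour-glass structure whose sum is `∑_{i ∈ S'} x i`. -/
theorem hourglass_explicit_path_of_subset
    (n : ℕ) (hn : 2 ≤ n) (hneven : Even n)
    (x : ℕ → ℕ) (hx : ∀ i, 1 ≤ i → i ≤ n → 0 < x i)
    (S' : Finset ℕ) (hS' : S' ⊆ Finset.Icc 1 n)
    (c : ℕ → ℤ)
    (hc : c = fun r => if r % 2 = 1 then
        (if (r + 1) / 2 ∈ S' then (n : ℤ) - 1 else (n : ℤ) + 1)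
      else (n : ℤ)) :
    IsHGPath n c ∧ hgSum n x c = ∑ i ∈ S', x i :=
  hourglass_explicit_path_of_subset_general n hneven x S' hS' c hc
end

section
/- Let S ⊆ ℤ × ℤ be a finite nonempty connected set, and let w = max{c₁ : (c₁, c₂) ∈ S} − min{c₁ : (c₁, c₂) ∈ S} + 1 and h = max{c₂ : (c₁, c₂) ∈ S} − min{c₂ : (c₁, c₂) ∈ S} + 1 be the width and height of its bounding box. Then the perimeter of S is at least 2(w + h). In particular, a connected set containing two cells whose first coordinates differ by at least 8 has perimeter at least 20. -/
/-- Two cells of `ℤ × ℤ` are adjacent if `|c₁ - d₁| + |c₂ - d₂| = 1`. -/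
def Adj (c d : ℤ × ℤ) : Prop :=
  |c.1 - d.1| + |c.2 - d.2| = 1

/-- The perimeter of a finite set `S ⊆ ℤ × ℤ`: the number of ordered pairs
`(c, d)` with `c ∈ S`, `d ∉ S`, and `c, d` adjacent. -/
noncomputable def perimeter (S : Finset (ℤ × ℤ)) : ℕ :=
  Set.ncard {p : (ℤ × ℤ) × (ℤ × ℤ) | p.1 ∈ S ∧ p.2 ∉ S ∧ Adj p.1 p.2}

/-- A finite set `S ⊆ ℤ × ℤ` is connected if any two of its cells are joined by a
finite sequence of cells of `S` in which consecutive cells are adjacent. -/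
def Conn (S : Finset (ℤ × ℤ)) : Prop :=
  ∀ a ∈ S, ∀ b ∈ S, ∃ (k : ℕ) (f : ℕ → ℤ × ℤ),
    f 0 = a ∧ f k = b ∧ (∀ i ≤ k, f i ∈ S) ∧ ∀ i < k, Adj (f i) (f (i + 1))

/-!
Along a path in `S` the first coordinate changes by at most one per step, so a path from a leftmost
to a rightmost cell of `S` meets every column of the bounding box; likewise every row is met.
Walking up from a cell of an occupied column one eventually leaves the finite set `S`, which
produces a wall on top of that column; in the same way each occupied column has a wall below and
each occupied row a wall on either side. These `2w + 2h` walls are distinct.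
-/

open Finset Function

def unitVecs : Finset (ℤ × ℤ) := {(1, 0), (-1, 0), (0, 1), (0, -1)}

lemma adj_iff_sub_mem_unitVecs {c d : ℤ × ℤ} : Adj c d ↔ d - c ∈ unitVecs := by
  obtain ⟨c₁, c₂⟩ := c
  obtain ⟨d₁, d₂⟩ := d
  simp only [Adj, unitVecs, Prod.mk_sub_mk, mem_insert, mem_singleton, Prod.mk.injEq]
  rcases abs_cases (c₁ - d₁) with h₁ | h₁ <;> rcases abs_cases (c₂ - d₂) with h₂ | h₂ <;> omega

lemma Adj.abs_sub_fst_le_one {c d : ℤ × ℤ} (h : Adj c d) : |d.1 - c.1| ≤ 1 := by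
  rw [abs_sub_comm]
  exact (le_add_of_nonneg_right (abs_nonneg _)).trans h.le

lemma Adj.abs_sub_snd_le_one {c d : ℤ × ℤ} (h : Adj c d) : |d.2 - c.2| ≤ 1 := by
  rw [abs_sub_comm]
  exact (le_add_of_nonneg_left (abs_nonneg _)).trans h.le

lemma Finset.exists_apply_mem_apply_succ_notMem {α : Type*} {S : Finset α} {f : ℕ → α}
    (hf : Injective f) (h₀ : f 0 ∈ S) : ∃ n, f n ∈ S ∧ f (n + 1) ∉ S := by
  by_contra! h
  have hS : ∀ n, f n ∈ S := fun n => Nat.rec h₀ (fun n hn => h n hn) n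
  exact Set.infinite_range_of_injective hf <|
    S.finite_toSet.subset (Set.range_subset_iff.2 hS)

section exitCells

variable {G : Type*} [AddLeftCancelMonoid G] [DecidableEq G]

def exitCells (S : Finset G) (v : G) : Finset G := {c ∈ S | c + v ∉ S}

lemma exists_add_nsmul_mem_exitCells [IsAddTorsionFree G] {S : Finset G} {c v : G}
    (hc : c ∈ S) (hv : v ≠ 0) : ∃ n : ℕ, c + n • v ∈ exitCells S v := by
  have hinj : Injective fun n : ℕ => c + n • v :=
    (add_right_injective c).comp <| injective_nsmul_iff_not_isOfFinAddOrder.2 <|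
      not_isOfFinAddOrder_of_isAddTorsionFree hv
  obtain ⟨n, hn, hn'⟩ := exists_apply_mem_apply_succ_notMem hinj (by simpa using hc)
  exact ⟨n, mem_filter.2 ⟨hn, by simpa [succ_nsmul, add_assoc] using hn'⟩⟩

lemma card_image_le_card_exitCells [IsAddTorsionFree G] {H : Type*} [AddMonoid H]
    [DecidableEq H] (π : G →+ H) {v : G} (hv : v ≠ 0) (hπv : π v = 0) (S : Finset G) :
    #(S.image π) ≤ #(exitCells S v) := by
  refine card_le_card_of_surjOn π fun y hy => ?_
  obtain ⟨c, hc, rfl⟩ := mem_image.1 hy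
  obtain ⟨n, hn⟩ := exists_add_nsmul_mem_exitCells hc hv
  exact ⟨c + n • v, hn, by simp [hπv]⟩

end exitCells

lemma perimeter_eq_sum_card_exitCells (S : Finset (ℤ × ℤ)) :
    perimeter S = ∑ v ∈ unitVecs, #(exitCells S v) := by
  have hB : {p : (ℤ × ℤ) × (ℤ × ℤ) | p.1 ∈ S ∧ p.2 ∉ S ∧ Adj p.1 p.2} =
      (fun p : (ℤ × ℤ) × (ℤ × ℤ) => (p.1, p.1 + p.2)) ''
        ({p ∈ S ×ˢ unitVecs | p.1 + p.2 ∉ S} : Finset _) := by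
    ext ⟨c, d⟩
    simp only [Set.mem_ofPred_eq, adj_iff_sub_mem_unitVecs, coe_filter, mem_product,
      Set.mem_image, Prod.mk.injEq]
    constructor
    · rintro ⟨hc, hd, hdc⟩
      exact ⟨(c, d - c), ⟨⟨hc, hdc⟩, by simpa using hd⟩, rfl, add_sub_cancel c d⟩
    · rintro ⟨⟨c, v⟩, ⟨⟨hc, hv⟩, hcv⟩, rfl, rfl⟩
      exact ⟨hc, hcv, by simpa using hv⟩
  have hinj : Injective fun p : (ℤ × ℤ) × (ℤ × ℤ) => (p.1, p.1 + p.2) := by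
    rintro ⟨c, v⟩ ⟨c', v'⟩ h
    obtain ⟨rfl, h⟩ := Prod.mk.inj h
    simpa using h
  rw [perimeter, hB, Set.ncard_image_of_injective _ hinj, Set.ncard_coe_finset, card_filter,
    sum_product_right]
  simp only [exitCells, card_filter]

lemma two_mul_card_image_add_le_perimeter (S : Finset (ℤ × ℤ)) :
    2 * (#(S.image Prod.fst) + #(S.image Prod.snd)) ≤ perimeter S := by
  have hfst (v : ℤ × ℤ) (hv : v ≠ 0) (hv₁ : v.1 = 0) : #(S.image Prod.fst) ≤ #(exitCells S v) :=
    card_image_le_card_exitCells (AddMonoidHom.fst ℤ ℤ) hv hv₁ S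
  have hsnd (v : ℤ × ℤ) (hv : v ≠ 0) (hv₂ : v.2 = 0) : #(S.image Prod.snd) ≤ #(exitCells S v) :=
    card_image_le_card_exitCells (AddMonoidHom.snd ℤ ℤ) hv hv₂ S
  rw [perimeter_eq_sum_card_exitCells, unitVecs, sum_insert (by decide), sum_insert (by decide),
    sum_pair (by decide)]
  have := hsnd (1, 0) (by decide) rfl
  have := hsnd (-1, 0) (by decide) rfl
  have := hfst (0, 1) (by decide) rfl
  have := hfst (0, -1) (by decide) rfl
  omega

lemma exists_eq_of_forall_abs_sub_le_one {g : ℕ → ℤ} {k : ℕ}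
    (hg : ∀ i < k, |g (i + 1) - g i| ≤ 1) {x : ℤ} (h₀ : g 0 ≤ x) (hk : x ≤ g k) :
    ∃ i ≤ k, g i = x := by
  induction k with
  | zero => exact ⟨0, le_rfl, le_antisymm h₀ hk⟩
  | succ k ih =>
    by_cases hx : x ≤ g k
    · obtain ⟨i, hi, rfl⟩ := ih (fun i hi => hg i (by omega)) hx
      exact ⟨i, by omega, rfl⟩
    · have := abs_le.1 (hg k k.lt_succ_self)
      exact ⟨k + 1, le_rfl, by omega⟩

namespace Conn

variable {S : Finset (ℤ × ℤ)} {π : ℤ × ℤ → ℤ}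

lemma exists_mem_apply_eq (hS : Conn S) (hπ : ∀ c d, Adj c d → |π d - π c| ≤ 1)
    {a b : ℤ × ℤ} (ha : a ∈ S) (hb : b ∈ S) {x : ℤ} (hax : π a ≤ x) (hxb : x ≤ π b) :
    ∃ c ∈ S, π c = x := by
  obtain ⟨k, f, rfl, rfl, hfS, hf⟩ := hS a ha b hb
  obtain ⟨i, hi, rfl⟩ := exists_eq_of_forall_abs_sub_le_one (g := π ∘ f)
    (fun i hi => hπ _ _ (hf i hi)) hax hxb
  exact ⟨f i, hfS i hi, rfl⟩

lemma max'_sub_min'_add_one_le_card_image (hS : Conn S) (hne : S.Nonempty)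
    (hπ : ∀ c d, Adj c d → |π d - π c| ≤ 1) :
    (S.image π).max' (hne.image π) - (S.image π).min' (hne.image π) + 1 ≤ #(S.image π) := by
  set m := (S.image π).min' (hne.image π)
  set M := (S.image π).max' (hne.image π)
  have hsub : Icc m M ⊆ S.image π := by
    intro x hx
    obtain ⟨a, ha, hax⟩ := mem_image.1 (min'_mem (S.image π) (hne.image π))
    obtain ⟨b, hb, hbx⟩ := mem_image.1 (max'_mem (S.image π) (hne.image π))
    rw [mem_Icc] at hx
    obtain ⟨c, hc, rfl⟩ := hS.exists_mem_apply_eq hπ ha hb (hax.trans_le hx.1)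
      (hx.2.trans_eq hbx.symm)
    exact mem_image_of_mem π hc
  calc M - m + 1 ≤ (M + 1 - m).toNat := by rw [add_sub_right_comm]; exact Int.self_le_toNat _
    _ = #(Icc m M) := by rw [Int.card_Icc]
    _ ≤ #(S.image π) := by exact_mod_cast card_le_card hsub

end Conn

/-- For a finite nonempty connected set `S` with bounding box of
width `w` and height `h`, the perimeter of `S` is at least `2(w + h)`; in
particular, a connected set containing two cells whose first coordinates differ
by at least 8 has perimeter at least 20. -/
theorem perimeter_ge_boundingBox (S : Finset (ℤ × ℤ)) (hS : S.Nonempty)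
    (hconn : Conn S) :
    2 * (((S.image Prod.fst).max' (hS.image Prod.fst) -
            (S.image Prod.fst).min' (hS.image Prod.fst) + 1) +
         ((S.image Prod.snd).max' (hS.image Prod.snd) -
            (S.image Prod.snd).min' (hS.image Prod.snd) + 1))
      ≤ (perimeter S : ℤ) ∧
    (∀ a ∈ S, ∀ b ∈ S, 8 ≤ |a.1 - b.1| → 20 ≤ perimeter S) := by
  have hper : (2 * (#(S.image Prod.fst) + #(S.image Prod.snd)) : ℤ) ≤ perimeter S := by
    exact_mod_cast two_mul_card_image_add_le_perimeter S
  have hw := hconn.max'_sub_min'_add_one_le_card_image hS fun _ _ h => h.abs_sub_fst_le_one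
  have hh := hconn.max'_sub_min'_add_one_le_card_image hS fun _ _ h => h.abs_sub_snd_le_one
  refine ⟨by omega, fun a ha b hb hab => ?_⟩
  have hwidth : |a.1 - b.1| ≤
      (S.image Prod.fst).max' (hS.image Prod.fst) - (S.image Prod.fst).min' (hS.image Prod.fst) :=
    abs_sub_le_iff.2
      ⟨sub_le_sub (le_max' _ _ (mem_image_of_mem _ ha)) (min'_le _ _ (mem_image_of_mem _ hb)),
        sub_le_sub (le_max' _ _ (mem_image_of_mem _ hb)) (min'_le _ _ (mem_image_of_mem _ ha))⟩
  have hheight := min'_le _ _ (max'_mem (S.image Prod.snd) (hS.image Prod.snd))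
  exact_mod_cast (show (20 : ℤ) ≤ perimeter S by omega)
end

section
/- Let G ⊆ ℤ × ℤ be a finite nonempty set of cells and let N ⊆ G be a set of numbered cells, each carrying the number 4. Then there exists a Knossos solution for (G, N) — that is, a partition of G into finitely many nonempty connected rooms such that every room contains exactly one cell of N and every room has perimeter equal to the number 4 inscribed in its numbered cell — if and only if N = G; in that case the unique such solution is the partition of G into singletons. -/
/-- A Knossos solution for a grid `G` with numbered cells `N`, all carrying the
number 4: a partition of `G` into finitely many nonempty connected rooms, each
containing exactly one numbered cell and having perimeter 4. -/
def IsKnossosSolution4 (G N : Finset (ℤ × ℤ)) (P : Finset (Finset (ℤ × ℤ))) : Prop :=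
  (∀ R ∈ P, R.Nonempty ∧ Conn R ∧ (R ∩ N).card = 1 ∧ perimeter R = 4) ∧
  (∀ R ∈ P, ∀ R' ∈ P, R ≠ R' → Disjoint R R') ∧
  (∀ c : ℤ × ℤ, c ∈ G ↔ ∃ R ∈ P, c ∈ R)

open Pointwise

theorem exists_exit_along {M : Type*} [AddCommGroup M] [IsAddTorsionFree M] (S : Finset M)
    {a : M} (ha : a ∈ S) {v : M} (hv : v ≠ 0) :
    ∃ c ∈ S, c + v ∉ S ∧ c - a ∈ AddSubgroup.zmultiples v := by
  by_contra hno_exit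
  have hstep : ∀ c ∈ S, c - a ∈ AddSubgroup.zmultiples v → c + v ∈ S :=
    fun c hc hca => by_contra fun hcv => hno_exit ⟨c, hc, hcv, hca⟩
  have hray : ∀ n : ℕ, a + n • v ∈ S := by
    intro n
    induction n with
    | zero => simpa using ha
    | succ n ih =>
      rw [succ_nsmul, ← add_assoc]
      exact hstep _ ih (by simp)
  have hinj : Function.Injective fun n : ℕ => a + n • v := by
    intro m n hmn
    have : (m : ℤ) • v = (n : ℤ) • v := by simpa [natCast_zsmul] using hmn
    exact_mod_cast smul_left_injective ℤ hv this
  obtain ⟨_, ⟨n, rfl⟩, hn⟩ := (Set.infinite_range_of_injective hinj).exists_notMem_finset S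
  exact hn (hray n)

def unitVectors : Finset (ℤ × ℤ) := {(1, 0), (-1, 0), (0, 1), (0, -1)}

theorem card_unitVectors : unitVectors.card = 4 := rfl

theorem ne_zero_of_mem_unitVectors {v : ℤ × ℤ} (hv : v ∈ unitVectors) : v ≠ 0 := by
  simp only [unitVectors, Finset.mem_insert, Finset.mem_singleton] at hv
  rcases hv with rfl | rfl | rfl | rfl <;> decide

theorem adj_iff_sub_mem_unitVectors (c d : ℤ × ℤ) : Adj c d ↔ d - c ∈ unitVectors := by
  simp only [Adj, unitVectors, Finset.mem_insert, Finset.mem_singleton, Prod.ext_iff,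
    Prod.fst_sub, Prod.snd_sub]
  rw [Int.abs_eq_natAbs, Int.abs_eq_natAbs]
  omega

theorem adj_add {c v : ℤ × ℤ} (hv : v ∈ unitVectors) : Adj c (c + v) := by
  rwa [adj_iff_sub_mem_unitVectors, add_sub_cancel_left]

theorem exists_unitVector_notMem_zmultiples {d : ℤ × ℤ} (hd : d ≠ 0) :
    ∃ w ∈ unitVectors, d ∉ AddSubgroup.zmultiples w := by
  by_cases h2 : d.2 = 0
  · refine ⟨(0, 1), by decide, ?_⟩
    rintro ⟨k, rfl⟩
    exact hd (Prod.ext (by simp) h2)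
  · refine ⟨(1, 0), by decide, ?_⟩
    rintro ⟨k, rfl⟩
    exact h2 (by simp)

theorem card_le_perimeter {S : Finset (ℤ × ℤ)} (T : Finset ((ℤ × ℤ) × (ℤ × ℤ)))
    (hT : ∀ p ∈ T, p.1 ∈ S ∧ p.2 ∉ S ∧ Adj p.1 p.2) : T.card ≤ perimeter S := by
  have hfin :
      {p : (ℤ × ℤ) × (ℤ × ℤ) | p.1 ∈ S ∧ p.2 ∉ S ∧ Adj p.1 p.2}.Finite := by
    refine (S ×ˢ (S + unitVectors)).finite_toSet.subset ?_
    rintro ⟨c, d⟩ ⟨hc, -, hcd⟩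
    rw [adj_iff_sub_mem_unitVectors] at hcd
    exact Finset.mem_coe.mpr <| Finset.mem_product.mpr
      ⟨hc, by simpa using Finset.add_mem_add hc hcd⟩
  rw [← Set.ncard_coe_finset]
  exact Set.ncard_le_ncard hT hfin

theorem perimeter_singleton (c : ℤ × ℤ) : perimeter {c} = 4 := by
  have hboundary : {p : (ℤ × ℤ) × (ℤ × ℤ) | p.1 ∈ ({c} : Finset (ℤ × ℤ)) ∧
      p.2 ∉ ({c} : Finset (ℤ × ℤ)) ∧ Adj p.1 p.2} =
      ↑(unitVectors.image fun v => (c, c + v)) := by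
    ext ⟨a, b⟩
    simp only [Finset.mem_singleton, Finset.coe_image, Set.mem_image,
      Finset.mem_coe, Prod.mk.injEq, adj_iff_sub_mem_unitVectors]
    constructor
    · rintro ⟨rfl, -, hv⟩
      exact ⟨b - a, hv, rfl, add_sub_cancel a b⟩
    · rintro ⟨v, hv, rfl, rfl⟩
      refine ⟨rfl, fun h => ne_zero_of_mem_unitVectors hv ?_, by simpa using hv⟩
      simpa using h
  rw [perimeter, hboundary, Set.ncard_coe_finset, Finset.card_image_of_injective _
    (fun v w h => by simpa using h), card_unitVectors]

theorem five_le_perimeter {S : Finset (ℤ × ℤ)} {a b : ℤ × ℤ} (ha : a ∈ S) (hb : b ∈ S)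
    (hab : a ≠ b) : 5 ≤ perimeter S := by
  choose! e he using fun v (hv : v ∈ unitVectors) =>
    exists_exit_along S ha (ne_zero_of_mem_unitVectors hv)
  obtain ⟨w, hw, hba⟩ := exists_unitVector_notMem_zmultiples (sub_ne_zero.mpr hab.symm)
  obtain ⟨f, hfS, hfw, hfb⟩ := exists_exit_along S hb (ne_zero_of_mem_unitVectors hw)
  have hfe : f ≠ e w := fun h => hba <| by
    simpa [h] using AddSubgroup.sub_mem _ (he w hw).2.2 hfb
  let pair : ℤ × ℤ → (ℤ × ℤ) × (ℤ × ℤ) := fun v => (e v, e v + v)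
  have hpair : Set.InjOn pair unitVectors := fun v _ w _ h => by
    obtain ⟨hfst, hsnd⟩ := Prod.mk.inj h
    rwa [hfst, add_right_inj] at hsnd
  have hfresh : (f, f + w) ∉ unitVectors.image pair := by
    simp only [Finset.mem_image, Prod.mk.injEq, not_exists, not_and, pair]
    intro v _ hf hfv
    obtain rfl : v = w := by rwa [← hf, add_right_inj] at hfv
    exact hfe hf.symm
  calc 5 = (insert (f, f + w) (unitVectors.image pair)).card := by
        rw [Finset.card_insert_of_notMem hfresh, Finset.card_image_of_injOn hpair,
          card_unitVectors]
    _ ≤ perimeter S := card_le_perimeter _ <| by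
        simp only [Finset.mem_insert, Finset.mem_image]
        rintro _ (rfl | ⟨v, hv, rfl⟩)
        · exact ⟨hfS, hfw, adj_add hw⟩
        · exact ⟨(he v hv).1, (he v hv).2.1, adj_add hv⟩

theorem eq_singleton_of_perimeter_eq_four {S : Finset (ℤ × ℤ)} (hS : S.Nonempty)
    (h4 : perimeter S = 4) : ∃ c, S = {c} := by
  obtain hsingle | ⟨a, ha, b, hb, hab⟩ := hS.exists_eq_singleton_or_nontrivial
  · exact hsingle
  · have := five_le_perimeter ha hb hab
    omega

theorem conn_singleton (c : ℤ × ℤ) : Conn {c} := by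
  intro a ha b hb
  rw [Finset.mem_singleton] at ha hb
  exact ⟨0, fun _ => c, ha.symm, hb.symm, fun _ _ => Finset.mem_singleton_self c,
    fun _ h => absurd h (Nat.not_lt_zero _)⟩

namespace IsKnossosSolution4

variable {G N : Finset (ℤ × ℤ)} {P : Finset (Finset (ℤ × ℤ))}

theorem singleton_mem (hP : IsKnossosSolution4 G N P) {c : ℤ × ℤ} (hc : c ∈ G) :
    {c} ∈ P := by
  obtain ⟨R, hR, hcR⟩ := (hP.2.2 c).mp hc
  obtain ⟨hne, -, -, hperim⟩ := hP.1 R hR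
  obtain ⟨d, rfl⟩ := eq_singleton_of_perimeter_eq_four hne hperim
  rwa [Finset.mem_singleton.mp hcR]

theorem subset (hP : IsKnossosSolution4 G N P) : G ⊆ N := by
  intro c hc
  have hnum := (hP.1 {c} (hP.singleton_mem hc)).2.2.1
  by_contra hcN
  simp [Finset.singleton_inter_of_notMem hcN] at hnum

theorem eq_image_singleton (hP : IsKnossosSolution4 G N P) : P = G.image ({·}) := by
  ext R
  rw [Finset.mem_image]
  constructor
  · intro hR
    obtain ⟨hne, -, -, hperim⟩ := hP.1 R hR
    obtain ⟨c, rfl⟩ := eq_singleton_of_perimeter_eq_four hne hperim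
    exact ⟨c, (hP.2.2 c).mpr ⟨{c}, hR, Finset.mem_singleton_self c⟩, rfl⟩
  · rintro ⟨c, hc, rfl⟩
    exact hP.singleton_mem hc

end IsKnossosSolution4

theorem isKnossosSolution4_image_singleton (G : Finset (ℤ × ℤ)) :
    IsKnossosSolution4 G G (G.image ({·})) := by
  refine ⟨?_, ?_, fun c => ?_⟩
  · simp only [Finset.mem_image]
    rintro _ ⟨c, hc, rfl⟩
    exact ⟨Finset.singleton_nonempty c, conn_singleton c,
      by rw [Finset.singleton_inter_of_mem hc, Finset.card_singleton], perimeter_singleton c⟩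
  · simp only [Finset.mem_image]
    rintro _ ⟨c, -, rfl⟩ _ ⟨d, -, rfl⟩ hcd
    exact Finset.disjoint_singleton.mpr fun h => hcd (by rw [h])
  · simp only [Finset.mem_image, exists_exists_and_eq_and, Finset.mem_singleton, exists_eq_right']

theorem knossos_all_fours_general (G : Finset (ℤ × ℤ))
    (N : Finset (ℤ × ℤ)) (hN : N ⊆ G) :
    ((∃ P : Finset (Finset (ℤ × ℤ)), IsKnossosSolution4 G N P) ↔ N = G) ∧
    (∀ P : Finset (Finset (ℤ × ℤ)), IsKnossosSolution4 G N P →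
      P = G.image (fun c => ({c} : Finset (ℤ × ℤ)))) := by
  refine ⟨⟨fun ⟨P, hP⟩ => ?_, ?_⟩, fun P hP => hP.eq_image_singleton⟩
  · exact hN.antisymm hP.subset
  · rintro rfl
    exact ⟨_, isKnossosSolution4_image_singleton N⟩

/-- For a finite nonempty grid `G` and numbered cells `N ⊆ G`
all carrying the number 4, a Knossos solution exists iff `N = G`, and any
solution is the partition of `G` into singletons. -/
theorem knossos_all_fours (G : Finset (ℤ × ℤ)) (hG : G.Nonempty)
    (N : Finset (ℤ × ℤ)) (hN : N ⊆ G) :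
    ((∃ P : Finset (Finset (ℤ × ℤ)), IsKnossosSolution4 G N P) ↔ N = G) ∧
    (∀ P : Finset (Finset (ℤ × ℤ)), IsKnossosSolution4 G N P →
      P = G.image (fun c => ({c} : Finset (ℤ × ℤ)))) :=
  knossos_all_fours_general G N hN
end
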